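/- arXiv:2508.14881 — 5 statements merged into one kernel-verified Lean document; each statement's English description precedes it below -/
import Mathlib

section
/- Let a, b, α, β, k > 0 and D_min ≥ 0, define D(σ, N) = D_min + (a/σ)^α + (b/N)^β and C(σ, N) = k·σ·N·D(σ, N). Suppose α < 1 or β < 1, and let D₀ > D_min. Then the unique minimizer of C(σ, N) subject to D(σ, N) ≤ D₀ over σ, N > 0 is σ* = a·((1 + α/β)/(D₀ − D_min))^{1/α}, N* = b·((1 + β/α)/(D₀ − D_min))^{1/β}. -/
/-!
Substituting `x = (a / σ) ^ α` and `y = (b / N) ^ β` turns the cost into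
`k a b (D_min + x + y) / (x ^ γ * y ^ δ)` with `γ = 1 / α`, `δ = 1 / β`, so one has to maximize
`x ^ γ * y ^ δ / (D_min + x + y)` subject to `x + y ≤ D₀ - D_min`. For a fixed sum `s = x + y`,
weighted AM-GM bounds `x ^ γ * y ^ δ` by a constant times `s ^ (γ + δ)`, with equality iff
`x : y = γ : δ`. Since `γ + δ > 1`, the function `s ↦ s ^ (γ + δ) / (D_min + s)` is strictly
increasing, so the constraint is active at the optimum.
-/

open Real

theorem strictMonoOn_rpow_div_add {m t : ℝ} (hm : 0 ≤ m) (ht : 1 < t) :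
    StrictMonoOn (fun s : ℝ => s ^ t / (m + s)) (Set.Ioi 0) := by
  intro s (hs : 0 < s) r (hr : 0 < r) hsr
  rw [div_lt_div_iff₀ (by positivity) (by positivity)]
  calc s ^ t * (m + r) = s ^ (t - 1) * (s * (m + r)) := by
        rw [rpow_sub_one hs.ne']; field_simp
    _ ≤ s ^ (t - 1) * (r * (m + s)) := by gcongr ?_ * ?_; nlinarith
    _ < r ^ (t - 1) * (r * (m + s)) := by gcongr
    _ = r ^ t * (m + s) := by rw [rpow_sub_one hr.ne']; field_simp

section

variable {γ δ m E x y : ℝ}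

theorem rpow_mul_rpow_eq_weighted_geom_mean_rpow (hγ : 0 < γ) (hδ : 0 < δ) (hx : 0 < x)
    (hy : 0 < y) :
    x ^ γ * y ^ δ = (γ / (γ + δ)) ^ γ * (δ / (γ + δ)) ^ δ *
      ((x / (γ / (γ + δ))) ^ (γ / (γ + δ)) * (y / (δ / (γ + δ))) ^ (δ / (γ + δ))) ^ (γ + δ) := by
  have ht : γ + δ ≠ 0 := by positivity
  rw [mul_rpow (by positivity) (by positivity), ← rpow_mul (by positivity),
    ← rpow_mul (by positivity), div_mul_cancel₀ _ ht, div_mul_cancel₀ _ ht,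
    div_rpow hx.le (by positivity), div_rpow hy.le (by positivity)]
  field_simp

theorem rpow_mul_rpow_le_add_rpow (hγ : 0 < γ) (hδ : 0 < δ) (hx : 0 < x) (hy : 0 < y) :
    x ^ γ * y ^ δ ≤ (γ / (γ + δ)) ^ γ * (δ / (γ + δ)) ^ δ * (x + y) ^ (γ + δ) := by
  rw [rpow_mul_rpow_eq_weighted_geom_mean_rpow hγ hδ hx hy]
  gcongr
  convert geom_mean_le_arith_mean2_weighted (w₁ := γ / (γ + δ)) (w₂ := δ / (γ + δ))
    (p₁ := x / (γ / (γ + δ))) (p₂ := y / (δ / (γ + δ))) (by positivity) (by positivity)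
    (by positivity) (by positivity) (by field_simp) using 1
  field_simp

theorem rpow_mul_rpow_lt_add_rpow (hγ : 0 < γ) (hδ : 0 < δ) (hx : 0 < x) (hy : 0 < y)
    (hne : δ * x ≠ γ * y) :
    x ^ γ * y ^ δ < (γ / (γ + δ)) ^ γ * (δ / (γ + δ)) ^ δ * (x + y) ^ (γ + δ) := by
  rw [rpow_mul_rpow_eq_weighted_geom_mean_rpow hγ hδ hx hy]
  gcongr
  convert (geom_mean_lt_arith_mean2_weighted_iff_of_pos (w₁ := γ / (γ + δ)) (w₂ := δ / (γ + δ))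
    (p₁ := x / (γ / (γ + δ))) (p₂ := y / (δ / (γ + δ))) (by positivity) (by positivity)
    (by positivity) (by positivity) (by field_simp)).2 ?_ using 1
  · field_simp
  · contrapose! hne
    field_simp at hne
    linarith

theorem rpow_mul_rpow_div_lt_of_ne (hγ : 0 < γ) (hδ : 0 < δ) (hγδ : 1 < γ + δ) (hm : 0 ≤ m)
    (hx : 0 < x) (hy : 0 < y) (hxy : x + y ≤ E)
    (hne : (x, y) ≠ (γ / (γ + δ) * E, δ / (γ + δ) * E)) :
    x ^ γ * y ^ δ / (m + x + y) < (γ / (γ + δ) * E) ^ γ * (δ / (γ + δ) * E) ^ δ /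
      (m + γ / (γ + δ) * E + δ / (γ + δ) * E) := by
  have hE : 0 < E := by linarith
  set P := (γ / (γ + δ)) ^ γ * (δ / (γ + δ)) ^ δ
  have hP : 0 < P := by positivity
  have hopt_prod : (γ / (γ + δ) * E) ^ γ * (δ / (γ + δ) * E) ^ δ = P * E ^ (γ + δ) := by
    rw [mul_rpow (by positivity) hE.le, mul_rpow (by positivity) hE.le, rpow_add hE]; ring
  have hopt_sum : m + γ / (γ + δ) * E + δ / (γ + δ) * E = m + E := by field_simp; ring
  have hmono := strictMonoOn_rpow_div_add hm hγδ
  rw [hopt_prod, hopt_sum, add_assoc]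
  rcases hxy.lt_or_eq with hlt | heq
  · calc x ^ γ * y ^ δ / (m + (x + y)) ≤ P * (x + y) ^ (γ + δ) / (m + (x + y)) := by
          gcongr ?_ / _; exact rpow_mul_rpow_le_add_rpow hγ hδ hx hy
      _ = P * ((x + y) ^ (γ + δ) / (m + (x + y))) := mul_div_assoc _ _ _
      _ < P * (E ^ (γ + δ) / (m + E)) :=
          mul_lt_mul_of_pos_left (hmono (by positivity : (0:ℝ) < x + y) hE hlt) hP
      _ = P * E ^ (γ + δ) / (m + E) := (mul_div_assoc _ _ _).symm
  · have hbal : δ * x ≠ γ * y := by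
      rintro hbal
      apply hne
      have : γ + δ ≠ 0 := by positivity
      simp only [Prod.mk.injEq, ← heq]
      constructor <;> field_simp <;> linarith
    rw [heq]
    exact div_lt_div_of_pos_right (heq ▸ rpow_mul_rpow_lt_add_rpow hγ hδ hx hy hbal)
      (by positivity)

theorem rpow_mul_rpow_div_le (hγ : 0 < γ) (hδ : 0 < δ) (hγδ : 1 < γ + δ) (hm : 0 ≤ m)
    (hx : 0 < x) (hy : 0 < y) (hxy : x + y ≤ E) :
    x ^ γ * y ^ δ / (m + x + y) ≤ (γ / (γ + δ) * E) ^ γ * (δ / (γ + δ) * E) ^ δ /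
      (m + γ / (γ + δ) * E + δ / (γ + δ) * E) := by
  by_cases hopt : (x, y) = (γ / (γ + δ) * E, δ / (γ + δ) * E)
  · simp only [Prod.mk.injEq] at hopt
    rw [hopt.1, hopt.2]
  · exact (rpow_mul_rpow_div_lt_of_ne hγ hδ hγδ hm hx hy hxy hopt).le

end

theorem div_mul_rpow_one_div_rpow {a c α : ℝ} (ha : 0 < a) (hc : 0 < c) (hα : α ≠ 0) :
    (a / (a * c ^ (1 / α))) ^ α = c⁻¹ := by
  rw [div_mul_cancel_left₀ ha.ne', inv_rpow (by positivity), one_div, rpow_inv_rpow hc.le hα]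

theorem eq_of_div_rpow_eq {a α σ τ : ℝ} (ha : 0 < a) (hα : α ≠ 0) (hσ : 0 < σ) (hτ : 0 < τ)
    (h : (a / σ) ^ α = (a / τ) ^ α) : σ = τ := by
  have := rpow_left_injOn hα (div_pos ha hσ).le (div_pos ha hτ).le h
  rwa [div_eq_mul_inv, div_eq_mul_inv, mul_right_inj' ha.ne', inv_inj] at this

theorem stmt_1 (a b α β k Dmin D₀ : ℝ)
    (ha : 0 < a) (hb : 0 < b) (hα : 0 < α) (hβ : 0 < β) (hk : 0 < k)
    (hDmin : 0 ≤ Dmin) (hαβ : α < 1 ∨ β < 1) (hD₀ : Dmin < D₀)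
    (D : ℝ → ℝ → ℝ) (hD : ∀ σ N, D σ N = Dmin + (a / σ) ^ α + (b / N) ^ β)
    (C : ℝ → ℝ → ℝ) (hC : ∀ σ N, C σ N = k * σ * N * D σ N) :
    let σs := a * ((1 + α / β) / (D₀ - Dmin)) ^ (1 / α)
    let Ns := b * ((1 + β / α) / (D₀ - Dmin)) ^ (1 / β)
    (0 < σs ∧ 0 < Ns ∧ D σs Ns ≤ D₀) ∧
      (∀ σ N, 0 < σ → 0 < N → D σ N ≤ D₀ → C σs Ns ≤ C σ N) ∧
      (∀ σ N, 0 < σ → 0 < N → D σ N ≤ D₀ → C σ N = C σs Ns → σ = σs ∧ N = Ns) := by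
  intro σs Ns
  have hE : 0 < D₀ - Dmin := sub_pos.2 hD₀
  have hγδ : 1 < 1 / α + 1 / β := by
    rcases hαβ with h | h
    · linarith [one_lt_one_div hα h, one_div_pos.2 hβ]
    · linarith [one_lt_one_div hβ h, one_div_pos.2 hα]
  have hσs : 0 < σs := by positivity
  have hNs : 0 < Ns := by positivity
  have hxs : (a / σs) ^ α = 1 / α / (1 / α + 1 / β) * (D₀ - Dmin) := by
    rw [div_mul_rpow_one_div_rpow ha (by positivity) hα.ne']; field_simp
  have hys : (b / Ns) ^ β = 1 / β / (1 / α + 1 / β) * (D₀ - Dmin) := by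
    rw [div_mul_rpow_one_div_rpow hb (by positivity) hβ.ne']; field_simp; ring
  have hDs : D σs Ns = D₀ := by
    rw [hD, hxs, hys]; field_simp; ring
  have hC_eq : ∀ σ N, 0 < σ → 0 < N → C σ N = k * a * b /
      (((a / σ) ^ α) ^ (1 / α) * ((b / N) ^ β) ^ (1 / β) /
        (Dmin + (a / σ) ^ α + (b / N) ^ β)) := by
    intro σ N hσ hN
    rw [hC, hD, one_div, one_div, rpow_rpow_inv (by positivity) hα.ne',
      rpow_rpow_inv (by positivity) hβ.ne']
    field_simp
  refine ⟨⟨hσs, hNs, hDs.le⟩, fun σ N hσ hN hDσN => ?_, fun σ N hσ hN hDσN hCσN => ?_⟩ <;>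
    rw [hD] at hDσN
  · rw [hC_eq σs Ns hσs hNs, hC_eq σ N hσ hN, hxs, hys]
    exact div_le_div_of_nonneg_left (by positivity) (by positivity)
      (rpow_mul_rpow_div_le (by positivity) (by positivity) hγδ hDmin (by positivity)
        (by positivity) (by linarith))
  · have hopt : ((a / σ) ^ α, (b / N) ^ β) = ((a / σs) ^ α, (b / Ns) ^ β) := by
      rw [hxs, hys]
      by_contra hne
      have hlt := rpow_mul_rpow_div_lt_of_ne (by positivity) (by positivity) hγδ hDmin
        (by positivity) (by positivity) (by linarith) hne
      rw [hC_eq σ N hσ hN, hC_eq σs Ns hσs hNs, hxs, hys] at hCσN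
      exact (div_lt_div_of_pos_left (by positivity) (by positivity) hlt).ne' hCσN
    simp only [Prod.mk.injEq] at hopt
    exact ⟨eq_of_div_rpow_eq ha hα.ne' hσ hσs hopt.1, eq_of_div_rpow_eq hb hβ.ne' hN hNs hopt.2⟩
end

section
/- With the setup of the compute-minimization problem (D(σ,N) = D_min + (a/σ)^α + (b/N)^β, C = k σ N D, α < 1 or β < 1, D₀ > D_min), the optimal pair (σ*, N*) satisfies the relation N* = ((β·b^β)/(α·a^α))^{1/β} · (σ*)^{α/β}. -/
open Real

theorem stmt_2 (a b α β k Dmin D₀ : ℝ)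
    (ha : 0 < a) (hb : 0 < b) (hα : 0 < α) (hβ : 0 < β) (hk : 0 < k)
    (hDmin : 0 ≤ Dmin) (hαβ : α < 1 ∨ β < 1) (hD₀ : Dmin < D₀) :
    let σs := a * ((1 + α / β) / (D₀ - Dmin)) ^ (1 / α)
    let Ns := b * ((1 + β / α) / (D₀ - Dmin)) ^ (1 / β)
    Ns = ((β * b ^ β) / (α * a ^ α)) ^ (1 / β) * σs ^ (α / β) := by
  intro σs Ns
  have hE : (0:ℝ) < D₀ - Dmin := by linarith
  have hT : (0:ℝ) < (1 + α / β) / (D₀ - Dmin) := by positivity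
  set T := (1 + α / β) / (D₀ - Dmin) with hTdef
  have h1 : (1 + β / α) / (D₀ - Dmin) = (β / α) * T := by
    rw [hTdef]; field_simp; ring
  have h2 : σs ^ (α / β) = a ^ (α / β) * T ^ (1 / β) := by
    show (a * T ^ (1/α)) ^ (α / β) = _
    rw [mul_rpow ha.le (rpow_nonneg hT.le _),
      ← Real.rpow_mul hT.le,
      show 1 / α * (α / β) = 1 / β by field_simp]
  have h3 : ((β * b ^ β) / (α * a ^ α)) ^ (1 / β)
      = (β / α) ^ (1 / β) * b / a ^ (α / β) := by
    rw [div_rpow (by positivity) (by positivity),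
      mul_rpow hβ.le (rpow_nonneg hb.le _),
      mul_rpow hα.le (rpow_nonneg ha.le _),
      ← Real.rpow_mul hb.le, ← Real.rpow_mul ha.le,
      mul_one_div_cancel hβ.ne', Real.rpow_one,
      div_rpow hβ.le hα.le, mul_one_div α β]
    ring
  show b * ((1 + β / α) / (D₀ - Dmin)) ^ (1 / β) = _
  rw [h1, h2, h3, mul_rpow (by positivity) hT.le]
  field_simp
end

section
/- Let D(σ, N) = D_min + (a/σ)^α + (b/N)^β, C(σ, N) = k σ N D(σ, N), F(σ, N) = C(σ, N) + δ·D(σ, N), with a, b, k, δ > 0, D_min ≥ 0, and α, β ∈ (0,1). Then F attains a global minimum on (0,∞)², the minimizer (σ*, N*) is unique, and it satisfies N* = ((β b^β)/(α a^α))^{1/β} (σ*)^{α/β}. -/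
/-!
For `σ, N > 0` write `F = (kσN + δ)·(D_min + Aσ^(-α) + BN^(-β))` with `A = a^α`, `B = b^β`.
The term `δAσ^(-α)` makes `F` blow up as `σ → 0`, and `kσN·Aσ^(-α) = kAσ^(1-α)N` makes it blow
up as `σ → ∞` while `N` stays bounded below, because `α < 1`; symmetrically in `N`. So `F` is
larger than `F 1 1` off a compact box and attains its minimum there. At a minimizer both partial
derivatives vanish: `kσN·D = (kσN + δ)·αAσ^(-α) = (kσN + δ)·βBN^(-β)`. Equating the last two gives
the ridge `N = c σ^(α/β)`; dividing the first equation by `t = αAσ^(-α)` turns it into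
`kσN·(D_min/t + 1/α + 1/β - 1) = δ`, whose left side is strictly increasing along the ridge.
Hence the minimizer is unique.
-/

open Real Set Filter Topology Function

theorem exists_isMinOn_of_le_off_compact {X : Type*} [TopologicalSpace X] {f : X → ℝ}
    {U K : Set X} (hK : IsCompact K) (hf : ContinuousOn f K) {x₀ : X} (hx₀ : x₀ ∈ K)
    (hout : ∀ x ∈ U, x ∉ K → f x₀ ≤ f x) : ∃ m ∈ K, IsMinOn f U m := by
  obtain ⟨m, hm, hmin⟩ := hK.exists_isMinOn ⟨x₀, hx₀⟩ hf
  refine ⟨m, hm, fun x hx => ?_⟩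
  by_cases hxK : x ∈ K
  · exact hmin hxK
  · exact (hmin hx₀).trans (hout x hx hxK)

lemma eq_mul_rpow_of_mul_rpow_neg_eq {p q α β s n : ℝ} (hp : 0 < p) (hq : 0 < q) (hβ : β ≠ 0)
    (hs : 0 < s) (hn : 0 < n) (h : p * s ^ (-α) = q * n ^ (-β)) :
    n = (q / p) ^ (1 / β) * s ^ (α / β) := by
  have hnβ : n ^ β = q / p * s ^ α := by
    rw [rpow_neg hs.le, rpow_neg hn.le] at h
    have : 0 < s ^ α := by positivity
    have : 0 < n ^ β := by positivity
    field_simp at h ⊢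
    linear_combination h
  rw [← rpow_rpow_inv hn.le hβ, hnβ, mul_rpow (by positivity) (by positivity), ← rpow_mul hs.le,
    one_div, div_eq_mul_inv α]

lemma strictMonoOn_mul_mul_rpow_mul {k c γ d α κ : ℝ} (hk : 0 < k) (hc : 0 < c) (hγ : 0 ≤ γ)
    (hα : 0 ≤ α) (hd : 0 ≤ d) (hκ : 0 < κ) :
    StrictMonoOn (fun s => k * s * (c * s ^ γ) * (d * s ^ α + κ)) (Ioi 0) := by
  intro x (hx : 0 < x) y (hy : 0 < y) hxy
  calc k * x * (c * x ^ γ) * (d * x ^ α + κ) < k * y * (c * x ^ γ) * (d * x ^ α + κ) := by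
        gcongr
    _ ≤ k * y * (c * y ^ γ) * (d * y ^ α + κ) := by gcongr

noncomputable section

-- `loss` and `budget` are the paper's `D` and `F` with `A = a^α`, `B = b^β`, for `σ, N > 0`.
def loss (D₀ A α B β σ N : ℝ) : ℝ := D₀ + A * σ ^ (-α) + B * N ^ (-β)

def budget (k δ D₀ A α B β σ N : ℝ) : ℝ := (k * σ * N + δ) * loss D₀ A α B β σ N

end

section

variable {k δ D₀ A B α β σ N s n : ℝ}

lemma loss_swap : loss D₀ A α B β σ N = loss D₀ B β A α N σ := by
  unfold loss; ring

lemma budget_swap : budget k δ D₀ A α B β σ N = budget k δ D₀ B β A α N σ := by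
  unfold budget; rw [loss_swap]; ring

lemma continuousOn_budget :
    ContinuousOn (uncurry (budget k δ D₀ A α B β)) (Ioi 0 ×ˢ Ioi 0) := by
  have h₁ : ContinuousOn (fun p : ℝ × ℝ => p.1 ^ (-α)) (Ioi 0 ×ˢ Ioi 0) :=
    continuousOn_fst.rpow_const fun p hp => Or.inl hp.1.ne'
  have h₂ : ContinuousOn (fun p : ℝ × ℝ => p.2 ^ (-β)) (Ioi 0 ×ˢ Ioi 0) :=
    continuousOn_snd.rpow_const fun p hp => Or.inl hp.2.ne'
  unfold uncurry budget loss
  fun_prop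

lemma mul_rpow_neg_le_budget (hk : 0 ≤ k) (hδ : 0 ≤ δ) (hD₀ : 0 ≤ D₀) (hA : 0 ≤ A)
    (hB : 0 ≤ B) (hσ : 0 < σ) (hN : 0 < N) :
    δ * (A * σ ^ (-α)) ≤ budget k δ D₀ A α B β σ N := by
  have : 0 ≤ k * σ * N := by positivity
  unfold budget loss
  nlinarith [show 0 ≤ B * N ^ (-β) by positivity, show 0 ≤ A * σ ^ (-α) by positivity]

lemma mul_rpow_le_budget (hk : 0 ≤ k) (hδ : 0 ≤ δ) (hD₀ : 0 ≤ D₀) (hA : 0 ≤ A)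
    (hB : 0 ≤ B) (hσ : 0 < σ) (hN : 0 < N) :
    k * A * σ ^ (1 - α) * N ≤ budget k δ D₀ A α B β σ N := by
  have hpow : σ ^ (1 - α) = σ * σ ^ (-α) := by
    rw [sub_eq_add_neg, rpow_add hσ, rpow_one]
  have : 0 ≤ k * σ * N := by positivity
  rw [hpow]
  unfold budget loss
  nlinarith [show 0 ≤ B * N ^ (-β) by positivity, show 0 ≤ A * σ ^ (-α) by positivity]

lemma exists_lt_budget_of_le_left (M : ℝ) (hk : 0 ≤ k) (hδ : 0 < δ) (hD₀ : 0 ≤ D₀)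
    (hA : 0 < A) (hB : 0 ≤ B) (hα : 0 < α) :
    ∃ s₀ ∈ Ioc (0 : ℝ) 1, ∀ σ N, 0 < σ → σ ≤ s₀ → 0 < N → M < budget k δ D₀ A α B β σ N := by
  obtain ⟨s₀, hM, hs₀⟩ := ((((tendsto_rpow_neg_nhdsGT_zero (neg_lt_zero.2 hα)).const_mul_atTop
    (mul_pos hδ hA)).eventually_gt_atTop M).and (Ioc_mem_nhdsGT one_pos)).exists
  refine ⟨s₀, hs₀, fun σ N hσ hσs₀ hN => ?_⟩
  calc M < δ * A * s₀ ^ (-α) := hM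
    _ ≤ δ * A * σ ^ (-α) :=
      mul_le_mul_of_nonneg_left (rpow_le_rpow_of_nonpos hσ hσs₀ (neg_nonpos.2 hα.le))
        (by positivity)
    _ = δ * (A * σ ^ (-α)) := mul_assoc _ _ _
    _ ≤ _ := mul_rpow_neg_le_budget hk hδ.le hD₀ hA.le hB hσ hN

lemma exists_lt_budget_of_ge_left (M : ℝ) {n₀ : ℝ} (hn₀ : 0 < n₀) (hk : 0 < k) (hδ : 0 ≤ δ)
    (hD₀ : 0 ≤ D₀) (hA : 0 < A) (hB : 0 ≤ B) (hα1 : α < 1) :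
    ∃ S ≥ (1 : ℝ), ∀ σ N, S ≤ σ → n₀ ≤ N → M < budget k δ D₀ A α B β σ N := by
  obtain ⟨S, hM, hS⟩ := ((((tendsto_rpow_atTop (sub_pos.2 hα1)).const_mul_atTop
    (by positivity : 0 < k * A * n₀)).eventually_gt_atTop M).and (eventually_ge_atTop 1)).exists
  refine ⟨S, hS, fun σ N hSσ hn₀N => ?_⟩
  have hσ : 0 < σ := by linarith
  calc M < k * A * n₀ * S ^ (1 - α) := hM
    _ ≤ k * A * σ ^ (1 - α) * N := by
      rw [mul_right_comm]; gcongr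
    _ ≤ _ := mul_rpow_le_budget hk.le hδ hD₀ hA.le hB hσ (by linarith)

theorem exists_isMinOn_budget (hk : 0 < k) (hδ : 0 < δ) (hD₀ : 0 ≤ D₀) (hA : 0 < A)
    (hB : 0 < B) (hα : 0 < α) (hα1 : α < 1) (hβ : 0 < β) (hβ1 : β < 1) :
    ∃ m ∈ Ioi 0 ×ˢ Ioi 0, IsMinOn (uncurry (budget k δ D₀ A α B β)) (Ioi 0 ×ˢ Ioi 0) m := by
  set M := budget k δ D₀ A α B β 1 1
  obtain ⟨s₀, ⟨hs₀, hs₀1⟩, hleft⟩ := exists_lt_budget_of_le_left M hk.le hδ hD₀ hA hB.le hα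
  obtain ⟨n₀, ⟨hn₀, hn₀1⟩, hbottom⟩ := exists_lt_budget_of_le_left M hk.le hδ hD₀ hB hA.le hβ
  obtain ⟨S, hS1, hright⟩ := exists_lt_budget_of_ge_left M hn₀ hk hδ.le hD₀ hA hB.le hα1
  obtain ⟨N₁, hN₁1, htop⟩ := exists_lt_budget_of_ge_left M hs₀ hk hδ.le hD₀ hB hA.le hβ1
  have hKQ : Icc s₀ S ×ˢ Icc n₀ N₁ ⊆ Ioi 0 ×ˢ Ioi 0 :=
    prod_mono (fun σ hσ => hs₀.trans_le hσ.1) (fun N hN => hn₀.trans_le hN.1)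
  have hout : ∀ p ∈ Ioi 0 ×ˢ Ioi 0, p ∉ Icc s₀ S ×ˢ Icc n₀ N₁ →
      uncurry (budget k δ D₀ A α B β) (1, 1) ≤ uncurry (budget k δ D₀ A α B β) p := by
    rintro ⟨σ, N⟩ ⟨hσ, hN⟩ hK
    by_contra! hlt
    simp only [uncurry_apply_pair] at hlt
    have hs₀σ : s₀ ≤ σ := le_of_not_gt fun h => (hleft σ N hσ h.le hN).not_gt hlt
    have hn₀N : n₀ ≤ N := le_of_not_gt fun h => by
      rw [budget_swap] at hlt; exact (hbottom N σ hN h.le hσ).not_gt hlt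
    have hσS : σ ≤ S := le_of_not_gt fun h => (hright σ N h.le hn₀N).not_gt hlt
    have hNN₁ : N ≤ N₁ := le_of_not_gt fun h => by
      rw [budget_swap] at hlt; exact (htop N σ h.le hs₀σ).not_gt hlt
    exact hK ⟨⟨hs₀σ, hσS⟩, hn₀N, hNN₁⟩
  obtain ⟨m, hm, hmin⟩ := exists_isMinOn_of_le_off_compact (isCompact_Icc.prod isCompact_Icc)
    (continuousOn_budget.mono hKQ) ⟨⟨hs₀1, hS1⟩, hn₀1, hN₁1⟩ hout
  exact ⟨m, hKQ hm, hmin⟩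

lemma hasDerivAt_budget_left (hs : 0 < s) :
    HasDerivAt (fun σ => budget k δ D₀ A α B β σ n)
      (k * n * loss D₀ A α B β s n + (k * s * n + δ) * (A * (-α * s ^ (-α - 1)))) s := by
  have hlin : HasDerivAt (fun σ => k * σ * n + δ) (k * n) s := by
    simpa using (((hasDerivAt_id s).const_mul k).mul_const n).add_const δ
  have hloss : HasDerivAt (fun σ => loss D₀ A α B β σ n) (A * (-α * s ^ (-α - 1))) s :=
    (((hasDerivAt_rpow_const (p := -α) (Or.inl hs.ne')).const_mul A).const_add
      D₀).add_const (B * n ^ (-β))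
  exact hlin.mul hloss

lemma mul_loss_eq_of_isLocalMin_left (hs : 0 < s)
    (hmin : IsLocalMin (fun σ => budget k δ D₀ A α B β σ n) s) :
    k * s * n * loss D₀ A α B β s n = (k * s * n + δ) * (α * A * s ^ (-α)) := by
  have hzero := hmin.hasDerivAt_eq_zero (hasDerivAt_budget_left hs)
  have hpow : s ^ (-α - 1) * s = s ^ (-α) := by
    rw [← rpow_add_one hs.ne', sub_add_cancel]
  linear_combination s * hzero + ((k * s * n + δ) * α * A) * hpow

lemma mul_loss_eq_of_isLocalMin_right (hn : 0 < n)
    (hmin : IsLocalMin (fun N => budget k δ D₀ A α B β s N) n) :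
    k * s * n * loss D₀ A α B β s n = (k * s * n + δ) * (β * B * n ^ (-β)) := by
  simp only [budget_swap (σ := s)] at hmin
  rw [loss_swap]
  linear_combination mul_loss_eq_of_isLocalMin_left hn hmin

lemma budget_firstOrder_of_isMinOn (hk : 0 ≤ k) (hδ : 0 < δ) (hs : 0 < s) (hn : 0 < n)
    (hmin : IsMinOn (uncurry (budget k δ D₀ A α B β)) (Ioi 0 ×ˢ Ioi 0) (s, n)) :
    k * s * n * loss D₀ A α B β s n = (k * s * n + δ) * (α * A * s ^ (-α)) ∧
      α * A * s ^ (-α) = β * B * n ^ (-β) := by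
  have hleft := mul_loss_eq_of_isLocalMin_left hs <|
    mem_of_superset (Ioi_mem_nhds hs) fun _ hσ => hmin (mk_mem_prod hσ hn)
  have hright := mul_loss_eq_of_isLocalMin_right hn <|
    mem_of_superset (Ioi_mem_nhds hn) fun _ hN => hmin (mk_mem_prod hs hN)
  have hpos : 0 < k * s * n + δ := by positivity
  exact ⟨hleft, mul_left_cancel₀ hpos.ne' (hleft.symm.trans hright)⟩

lemma budget_ridge_of_isMinOn (hk : 0 ≤ k) (hδ : 0 < δ) (hA : 0 < A) (hB : 0 < B)
    (hα : 0 < α) (hβ : 0 < β) (hs : 0 < s) (hn : 0 < n)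
    (hmin : IsMinOn (uncurry (budget k δ D₀ A α B β)) (Ioi 0 ×ˢ Ioi 0) (s, n)) :
    n = (β * B / (α * A)) ^ (1 / β) * s ^ (α / β) :=
  eq_mul_rpow_of_mul_rpow_neg_eq (by positivity) (by positivity) hβ.ne' hs hn
    (budget_firstOrder_of_isMinOn hk hδ hs hn hmin).2

lemma budget_ridgeEquation_of_isMinOn (hk : 0 ≤ k) (hδ : 0 < δ) (hA : 0 < A) (hα : 0 < α)
    (hβ : 0 < β) (hs : 0 < s) (hn : 0 < n)
    (hmin : IsMinOn (uncurry (budget k δ D₀ A α B β)) (Ioi 0 ×ˢ Ioi 0) (s, n)) :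
    k * s * n * (D₀ / (α * A) * s ^ α + (1 / α + 1 / β - 1)) = δ := by
  obtain ⟨hfoc, hridge⟩ := budget_firstOrder_of_isMinOn hk hδ hs hn hmin
  have hinv : s ^ α * s ^ (-α) = 1 := by rw [← rpow_add hs, add_neg_cancel, rpow_zero]
  have ht : 0 < α * A * s ^ (-α) := by positivity
  refine mul_right_cancel₀ ht.ne' ?_
  unfold loss at hfoc
  field_simp
  linear_combination (β * s ^ α) * hfoc + (k * s * n * s ^ α) * hridge
    - (k * s * n * A * β - (k * s * n + δ) * α * A * β + k * s * n * α * A) * hinv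

theorem eq_of_isMinOn_budget (hk : 0 < k) (hδ : 0 < δ) (hD₀ : 0 ≤ D₀) (hA : 0 < A)
    (hB : 0 < B) (hα : 0 < α) (hα1 : α < 1) (hβ : 0 < β) {p q : ℝ × ℝ}
    (hp : p ∈ Ioi 0 ×ˢ Ioi 0) (hq : q ∈ Ioi 0 ×ˢ Ioi 0)
    (hpmin : IsMinOn (uncurry (budget k δ D₀ A α B β)) (Ioi 0 ×ˢ Ioi 0) p)
    (hqmin : IsMinOn (uncurry (budget k δ D₀ A α B β)) (Ioi 0 ×ˢ Ioi 0) q) : p = q := by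
  obtain ⟨s₁, n₁⟩ := p
  obtain ⟨s₂, n₂⟩ := q
  obtain ⟨hs₁, hn₁⟩ : 0 < s₁ ∧ 0 < n₁ := hp
  obtain ⟨hs₂, hn₂⟩ : 0 < s₂ ∧ 0 < n₂ := hq
  have hκ : 0 < 1 / α + 1 / β - 1 := by
    have := one_lt_one_div hα hα1
    have : 0 < 1 / β := by positivity
    linarith
  have hmono := strictMonoOn_mul_mul_rpow_mul hk (by positivity : 0 < (β * B / (α * A)) ^ (1 / β))
    (div_nonneg hα.le hβ.le) hα.le (d := D₀ / (α * A)) (by positivity) hκ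
  have hridge₁ := budget_ridge_of_isMinOn hk.le hδ hA hB hα hβ hs₁ hn₁ hpmin
  have hridge₂ := budget_ridge_of_isMinOn hk.le hδ hA hB hα hβ hs₂ hn₂ hqmin
  have hfoc₁ := budget_ridgeEquation_of_isMinOn hk.le hδ hA hα hβ hs₁ hn₁ hpmin
  have hfoc₂ := budget_ridgeEquation_of_isMinOn hk.le hδ hA hα hβ hs₂ hn₂ hqmin
  rw [hridge₁] at hfoc₁
  rw [hridge₂] at hfoc₂
  have hs : s₁ = s₂ := hmono.injOn hs₁ hs₂ (hfoc₁.trans hfoc₂.symm)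
  rw [hridge₁, hridge₂, hs]

end

theorem stmt_7 (a b α β k δ Dmin : ℝ)
    (ha : 0 < a) (hb : 0 < b) (hk : 0 < k) (hδ : 0 < δ)
    (hα : 0 < α) (hα1 : α < 1) (hβ : 0 < β) (hβ1 : β < 1)
    (hDmin : 0 ≤ Dmin)
    (D : ℝ → ℝ → ℝ) (hD : ∀ σ N, D σ N = Dmin + (a / σ) ^ α + (b / N) ^ β)
    (C : ℝ → ℝ → ℝ) (hC : ∀ σ N, C σ N = k * σ * N * D σ N)
    (F : ℝ → ℝ → ℝ) (hF : ∀ σ N, F σ N = C σ N + δ * D σ N) :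
    (∃! p : ℝ × ℝ, 0 < p.1 ∧ 0 < p.2 ∧
        ∀ σ N, 0 < σ → 0 < N → F p.1 p.2 ≤ F σ N) ∧
    (∀ p : ℝ × ℝ, (0 < p.1 ∧ 0 < p.2 ∧
        ∀ σ N, 0 < σ → 0 < N → F p.1 p.2 ≤ F σ N) →
      p.2 = ((β * b ^ β) / (α * a ^ α)) ^ (1 / β) * p.1 ^ (α / β)) := by
  have hA : 0 < a ^ α := by positivity
  have hB : 0 < b ^ β := by positivity
  have hF_eq : ∀ σ N, 0 < σ → 0 < N → F σ N = budget k δ Dmin (a ^ α) α (b ^ β) β σ N := by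
    intro σ N hσ hN
    rw [hF, hC, hD, div_rpow ha.le hσ.le, div_rpow hb.le hN.le, budget, loss, rpow_neg hσ.le,
      rpow_neg hN.le]
    ring
  have hmin_iff : ∀ p : ℝ × ℝ,
      (0 < p.1 ∧ 0 < p.2 ∧ ∀ σ N, 0 < σ → 0 < N → F p.1 p.2 ≤ F σ N) ↔
        p ∈ Ioi 0 ×ˢ Ioi 0 ∧
          IsMinOn (uncurry (budget k δ Dmin (a ^ α) α (b ^ β) β)) (Ioi 0 ×ˢ Ioi 0) p := by
    rintro ⟨s, n⟩
    refine ⟨fun ⟨hs, hn, hmin⟩ => ⟨⟨hs, hn⟩, fun ⟨σ, N⟩ ⟨hσ, hN⟩ => ?_⟩,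
      fun ⟨⟨hs, hn⟩, hmin⟩ => ⟨hs, hn, fun σ N hσ hN => ?_⟩⟩
    · simpa only [mem_ofPred_eq, uncurry_apply_pair, hF_eq _ _ hs hn, hF_eq _ _ hσ hN] using
        hmin σ N hσ hN
    · simpa only [mem_ofPred_eq, uncurry_apply_pair, hF_eq _ _ hs hn, hF_eq _ _ hσ hN] using
        hmin (mk_mem_prod hσ hN)
  simp only [hmin_iff]
  obtain ⟨m, hmQ, hm⟩ := exists_isMinOn_budget hk hδ hDmin hA hB hα hα1 hβ hβ1
  refine ⟨⟨m, ⟨hmQ, hm⟩, fun p hp => eq_of_isMinOn_budget hk hδ hDmin hA hB hα hα1 hβ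
    hp.1 hmQ hp.2 hm⟩, ?_⟩
  rintro ⟨s, n⟩ ⟨⟨hs, hn⟩, hmin⟩
  exact budget_ridge_of_isMinOn hk.le hδ hA hB hα hβ hs hn hmin
end

section
/- Let D(σ, N) = D_min + (a/σ)^α + (b/N)^β with a, b, α, β > 0 and D_min ≥ 0, and suppose α < 1 or β < 1. For D₀ > D_min, let σ*(D₀), N*(D₀) be the optimizers minimizing C = k σ N D subject to D ≤ D₀. Then σ*(D₀) and N*(D₀) are both strictly decreasing functions of D₀ on (D_min, ∞), each of power-law form in (D₀ − D_min)⁻¹: σ*(D₀) = a((1+α/β)/(D₀−D_min))^{1/α} and N*(D₀) = b((1+β/α)/(D₀−D_min))^{1/β}. -/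
open Real

/-!
Substituting `x = (a/σ)^α`, `y = (b/N)^β` turns the cost into
`k a b · x^(-1/α) y^(-1/β) (D_min + x + y)` under the constraint `x + y ≤ D₀ - D_min`.
On each line `x + y = s` weighted AM–GM puts the minimum at `x : y = α⁻¹ : β⁻¹`, and along that
ray the cost is a multiple of `s^(-(1/α + 1/β)) (D_min + s)`, which decreases because
`1/α + 1/β > 1`. So the constraint is active and the minimiser is unique; undoing the
substitution gives the closed forms, which are visibly decreasing in `D₀`.
-/

noncomputable def reducedCost (m p q x y : ℝ) : ℝ := x ^ (-p) * y ^ (-q) * (m + x + y)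

lemma rpow_mul_rpow_lt_of_ne {p q x y : ℝ} (hp : 0 < p) (hq : 0 < q) (hx : 0 < x) (hy : 0 < y)
    (hne : x ≠ (x + y) * p / (p + q)) :
    x ^ p * y ^ q < ((x + y) * p / (p + q)) ^ p * ((x + y) * q / (p + q)) ^ q := by
  set x' := (x + y) * p / (p + q)
  set y' := (x + y) * q / (p + q)
  have hx' : 0 < x' := by positivity
  have hy' : 0 < y' := by positivity
  -- the tangent lines `log t ≤ t - 1`, weighted by `p` and `q`, cancel on `x + y = x' + y'`
  have hlogx := log_lt_sub_one_of_pos (div_pos hx hx') ((div_eq_one_iff_eq hx'.ne').not.2 hne)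
  have hlogy := log_le_sub_one_of_pos (div_pos hy hy')
  have htangent : p * (x / x' - 1) + q * (y / y' - 1) = 0 := by
    simp only [x', y']
    field_simp
    ring
  rw [log_div hx.ne' hx'.ne'] at hlogx
  rw [log_div hy.ne' hy'.ne'] at hlogy
  rw [rpow_def_of_pos hx, rpow_def_of_pos hy, rpow_def_of_pos hx', rpow_def_of_pos hy',
    ← exp_add, ← exp_add, exp_lt_exp]
  nlinarith [mul_lt_mul_of_pos_left hlogx hp, mul_le_mul_of_nonneg_left hlogy hq.le]

lemma reducedCost_lt_of_ne {m p q x y : ℝ} (hm : 0 ≤ m) (hp : 0 < p) (hq : 0 < q)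
    (hx : 0 < x) (hy : 0 < y) (hne : x ≠ (x + y) * p / (p + q)) :
    reducedCost m p q ((x + y) * p / (p + q)) ((x + y) * q / (p + q)) < reducedCost m p q x y := by
  have hsum : (x + y) * p / (p + q) + (x + y) * q / (p + q) = x + y := by
    field_simp
  unfold reducedCost
  rw [add_assoc m, hsum, add_assoc, rpow_neg hx.le, rpow_neg hy.le, rpow_neg (by positivity),
    rpow_neg (by positivity), ← mul_inv, ← mul_inv]
  exact mul_lt_mul_of_pos_right
    (inv_strictAnti₀ (by positivity) (rpow_mul_rpow_lt_of_ne hp hq hx hy hne)) (by positivity)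

lemma rpow_neg_mul_add_strictAntiOn {m r : ℝ} (hm : 0 ≤ m) (hr : 1 < r) :
    StrictAntiOn (fun s : ℝ ↦ s ^ (-r) * (m + s)) (Set.Ioi 0) := by
  intro s (hs : 0 < s) t (ht : 0 < t) hst
  have hsplit : ∀ u : ℝ, 0 < u → u ^ (-r) * (m + u) = m * u ^ (-r) + u ^ (-r + 1) := by
    intro u hu
    rw [rpow_add_one hu.ne']
    ring
  simp only [hsplit s hs, hsplit t ht]
  have h₁ : t ^ (-r) ≤ s ^ (-r) := rpow_le_rpow_of_nonpos hs hst.le (by linarith)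
  have h₂ : t ^ (-r + 1) < s ^ (-r + 1) := rpow_lt_rpow_of_neg hs hst (by linarith)
  nlinarith [mul_le_mul_of_nonneg_left h₁ hm]

lemma reducedCost_strictAntiOn_ray {m p q : ℝ} (hm : 0 ≤ m) (hp : 0 < p) (hq : 0 < q)
    (hpq : 1 < p + q) :
    StrictAntiOn (fun s ↦ reducedCost m p q (s * p / (p + q)) (s * q / (p + q))) (Set.Ioi 0) := by
  have hray : ∀ s : ℝ, 0 < s → reducedCost m p q (s * p / (p + q)) (s * q / (p + q)) =
      (p / (p + q)) ^ (-p) * (q / (p + q)) ^ (-q) * (s ^ (-(p + q)) * (m + s)) := by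
    intro s hs
    have hsum : s * p / (p + q) + s * q / (p + q) = s := by field_simp
    unfold reducedCost
    rw [add_assoc, hsum, mul_div_assoc, mul_div_assoc, mul_rpow hs.le (by positivity),
      mul_rpow hs.le (by positivity), neg_add, rpow_add hs]
    ring
  refine StrictAntiOn.congr ?_ fun s hs ↦ (hray s hs).symm
  intro s hs t ht hst
  exact mul_lt_mul_of_pos_left (rpow_neg_mul_add_strictAntiOn hm hpq hs ht hst) (by positivity)

theorem eq_of_reducedCost_le {m p q d x y : ℝ} (hm : 0 ≤ m) (hp : 0 < p) (hq : 0 < q)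
    (hpq : 1 < p + q) (hx : 0 < x) (hy : 0 < y) (hxy : x + y ≤ d)
    (hle : reducedCost m p q x y ≤ reducedCost m p q (d * p / (p + q)) (d * q / (p + q))) :
    x = d * p / (p + q) ∧ y = d * q / (p + q) := by
  have hanti := reducedCost_strictAntiOn_ray hm hp hq hpq
  have hs : (0 : ℝ) < x + y := by positivity
  have hline : x = (x + y) * p / (p + q) := by
    by_contra hne
    have := hanti.antitoneOn hs (hs.trans_le hxy) hxy
    linarith [reducedCost_lt_of_ne hm hp hq hx hy hne]
  have hline' : y = (x + y) * q / (p + q) := by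
    field_simp at hline ⊢
    linarith
  have hsd : x + y = d := by
    by_contra hne
    have := hanti hs (hs.trans_le hxy) (lt_of_le_of_ne hxy hne)
    dsimp only at this
    rw [← hline, ← hline'] at this
    linarith
  rw [← hsd]
  exact ⟨hline, hline'⟩

lemma div_mul_rpow_neg_inv_rpow {a x α : ℝ} (ha : 0 < a) (hx : 0 < x) (hα : α ≠ 0) :
    (a / (a * x ^ (-α⁻¹))) ^ α = x := by
  rw [rpow_neg hx.le, div_mul_eq_div_div, div_self ha.ne', one_div, inv_inv,
    rpow_inv_rpow hx.le hα]

lemma mul_rpow_rpow_neg_inv {a σ α : ℝ} (ha : 0 < a) (hσ : 0 < σ) (hα : α ≠ 0) :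
    a * ((a / σ) ^ α) ^ (-α⁻¹) = σ := by
  rw [rpow_neg (by positivity), rpow_rpow_inv (div_pos ha hσ).le hα, inv_div]
  field_simp

lemma share_rpow_neg_inv {α β d : ℝ} (hα : 0 < α) (hβ : 0 < β) (hd : 0 < d) :
    (d * α⁻¹ / (α⁻¹ + β⁻¹)) ^ (-α⁻¹) = ((1 + α / β) / d) ^ (1 / α) := by
  have hshare : d * α⁻¹ / (α⁻¹ + β⁻¹) = ((1 + α / β) / d)⁻¹ := by
    field_simp
  rw [hshare, rpow_neg (by positivity), inv_rpow (by positivity), inv_inv, one_div]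

lemma strictAntiOn_mul_div_sub_rpow {a c r m : ℝ} (ha : 0 < a) (hc : 0 < c) (hr : 0 < r) :
    StrictAntiOn (fun D ↦ a * (c / (D - m)) ^ r) (Set.Ioi m) := by
  intro D₁ (h₁ : m < D₁) D₂ (h₂ : m < D₂) h
  have : 0 < D₁ - m := by linarith
  dsimp only
  gcongr

theorem eq_of_minimizes_cost {a b α β k Dmin D₀ σ N : ℝ} (ha : 0 < a) (hb : 0 < b) (hα : 0 < α)
    (hβ : 0 < β) (hk : 0 < k) (hDmin : 0 ≤ Dmin) (hαβ : α < 1 ∨ β < 1) (hD₀ : Dmin < D₀)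
    (hσ : 0 < σ) (hN : 0 < N) (hfeas : Dmin + (a / σ) ^ α + (b / N) ^ β ≤ D₀)
    (hmin : ∀ σ' N', 0 < σ' → 0 < N' → Dmin + (a / σ') ^ α + (b / N') ^ β ≤ D₀ →
      k * σ * N * (Dmin + (a / σ) ^ α + (b / N) ^ β) ≤
        k * σ' * N' * (Dmin + (a / σ') ^ α + (b / N') ^ β)) :
    σ = a * ((1 + α / β) / (D₀ - Dmin)) ^ (1 / α) ∧
      N = b * ((1 + β / α) / (D₀ - Dmin)) ^ (1 / β) := by
  have hd : 0 < D₀ - Dmin := by linarith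
  have hpq : 1 < α⁻¹ + β⁻¹ := by
    rcases hαβ with h | h
    · linarith [(one_lt_inv₀ hα).2 h, inv_pos.2 hβ]
    · linarith [(one_lt_inv₀ hβ).2 h, inv_pos.2 hα]
  have hcost : ∀ x y : ℝ, k * (a * x ^ (-α⁻¹)) * (b * y ^ (-β⁻¹)) * (Dmin + x + y) =
      k * a * b * reducedCost Dmin α⁻¹ β⁻¹ x y := fun x y ↦ by
    rw [reducedCost]
    ring
  set x₀ := (a / σ) ^ α
  set y₀ := (b / N) ^ β
  set x' := (D₀ - Dmin) * α⁻¹ / (α⁻¹ + β⁻¹)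
  set y' := (D₀ - Dmin) * β⁻¹ / (α⁻¹ + β⁻¹)
  have hx₀ : 0 < x₀ := by positivity
  have hy₀ : 0 < y₀ := by positivity
  have hσ_eq : σ = a * x₀ ^ (-α⁻¹) := (mul_rpow_rpow_neg_inv ha hσ hα.ne').symm
  have hN_eq : N = b * y₀ ^ (-β⁻¹) := (mul_rpow_rpow_neg_inv hb hN hβ.ne').symm
  have hle : reducedCost Dmin α⁻¹ β⁻¹ x₀ y₀ ≤ reducedCost Dmin α⁻¹ β⁻¹ x' y' := by
    have hx' : 0 < x' := by positivity
    have hy' : 0 < y' := by positivity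
    have hsum : x' + y' = D₀ - Dmin := by
      simp only [x', y']
      field_simp
    have := hmin (a * x' ^ (-α⁻¹)) (b * y' ^ (-β⁻¹)) (by positivity) (by positivity)
      (by rw [div_mul_rpow_neg_inv_rpow ha hx' hα.ne', div_mul_rpow_neg_inv_rpow hb hy' hβ.ne']
          linarith)
    rw [div_mul_rpow_neg_inv_rpow ha hx' hα.ne', div_mul_rpow_neg_inv_rpow hb hy' hβ.ne',
      hcost, hσ_eq, hN_eq, hcost] at this
    exact le_of_mul_le_mul_left this (by positivity)
  obtain ⟨hx, hy⟩ := eq_of_reducedCost_le hDmin (inv_pos.2 hα) (inv_pos.2 hβ) hpq hx₀ hy₀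
    (by linarith) hle
  refine ⟨by rw [hσ_eq, hx, share_rpow_neg_inv hα hβ hd], ?_⟩
  rw [hN_eq, hy, add_comm α⁻¹, share_rpow_neg_inv hβ hα hd]

theorem stmt_11 (a b α β k Dmin : ℝ)
    (ha : 0 < a) (hb : 0 < b) (hα : 0 < α) (hβ : 0 < β) (hk : 0 < k)
    (hDmin : 0 ≤ Dmin) (hαβ : α < 1 ∨ β < 1)
    (D : ℝ → ℝ → ℝ) (hD : ∀ σ N, D σ N = Dmin + (a / σ) ^ α + (b / N) ^ β)
    (C : ℝ → ℝ → ℝ) (hC : ∀ σ N, C σ N = k * σ * N * D σ N)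
    (σs Ns : ℝ → ℝ)
    (hopt : ∀ D₀, Dmin < D₀ →
      0 < σs D₀ ∧ 0 < Ns D₀ ∧ D (σs D₀) (Ns D₀) ≤ D₀ ∧
      ∀ σ N, 0 < σ → 0 < N → D σ N ≤ D₀ → C (σs D₀) (Ns D₀) ≤ C σ N) :
    (∀ D₀, Dmin < D₀ →
        σs D₀ = a * ((1 + α / β) / (D₀ - Dmin)) ^ (1 / α) ∧
        Ns D₀ = b * ((1 + β / α) / (D₀ - Dmin)) ^ (1 / β)) ∧
    StrictAntiOn σs (Set.Ioi Dmin) ∧ StrictAntiOn Ns (Set.Ioi Dmin) := by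
  simp only [hC, hD] at hopt
  have hform : ∀ D₀, Dmin < D₀ →
      σs D₀ = a * ((1 + α / β) / (D₀ - Dmin)) ^ (1 / α) ∧
        Ns D₀ = b * ((1 + β / α) / (D₀ - Dmin)) ^ (1 / β) := fun D₀ hD₀ ↦ by
    obtain ⟨hσ, hN, hfeas, hmin⟩ := hopt D₀ hD₀
    exact eq_of_minimizes_cost ha hb hα hβ hk hDmin hαβ hD₀ hσ hN hfeas hmin
  refine ⟨hform, ?_, ?_⟩
  · exact (strictAntiOn_mul_div_sub_rpow ha (by positivity) (by positivity)).congr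
      fun D₀ hD₀ ↦ (hform D₀ hD₀).1.symm
  · exact (strictAntiOn_mul_div_sub_rpow hb (by positivity) (by positivity)).congr
      fun D₀ hD₀ ↦ (hform D₀ hD₀).2.symm
end

section
/- Let D(σ, N) = D_min + (a/σ)^α + (b/N)^β with a, b, α, β > 0, D_min ≥ 0, α < 1 or β < 1, and let (σ*(D₀), N*(D₀)) be the compute-optimal configuration for data budget D₀ > D_min. Then the compute at the optimum, C*(D₀) = k σ*(D₀) N*(D₀) D₀, satisfies C*(D₀) = k a b (1+α/β)^{1/α} (1+β/α)^{1/β} · D₀ · (D₀ − D_min)^{−1/α − 1/β}; in particular, if 1/α + 1/β > 1, then C*(D₀) → ∞ as D₀ → D_min⁺. -/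
/-!
The two power laws share the base `D₀ - Dmin`, so their product is a single power of it with
exponent `-(1/α + 1/β)`. Since `Dmin ≥ 0` gives `D₀ ≥ D₀ - Dmin`, the compute is bounded below by
a constant times `(D₀ - Dmin) ^ (1 - (1/α + 1/β))`, which blows up as `D₀ → Dmin⁺` when
`1/α + 1/β > 1`.
-/

open Real Filter Topology

lemma tendsto_sub_const_nhdsGT (c : ℝ) : Tendsto (fun x => x - c) (𝓝[>] c) (𝓝[>] 0) := by
  refine tendsto_nhdsWithin_of_tendsto_nhds_of_eventually_within _ ?_ ?_
  · simpa using ((continuous_sub_right c).tendsto c).mono_left nhdsWithin_le_nhds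
  · filter_upwards [self_mem_nhdsWithin] with x hx
    exact sub_pos.mpr (Set.mem_Ioi.mp hx)

lemma div_rpow_mul_div_rpow {c d x : ℝ} (hc : 0 ≤ c) (hd : 0 ≤ d) (hx : 0 < x) (p q : ℝ) :
    (c / x) ^ p * (d / x) ^ q = c ^ p * d ^ q * x ^ (-p - q) := by
  rw [div_rpow hc hx.le, div_rpow hd hx.le, rpow_sub hx, rpow_neg hx.le]
  field_simp

lemma tendsto_mul_mul_sub_rpow_nhdsGT {c K s : ℝ} (hc : 0 ≤ c) (hK : 0 < K) (hs : 1 < s) :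
    Tendsto (fun x => K * x * (x - c) ^ (-s)) (𝓝[>] c) atTop := by
  have lower : Tendsto (fun x => K * (x - c) ^ (1 - s)) (𝓝[>] c) atTop :=
    ((tendsto_rpow_neg_nhdsGT_zero (by linarith)).comp
      (tendsto_sub_const_nhdsGT c)).const_mul_atTop hK
  refine tendsto_atTop_mono' _ ?_ lower
  filter_upwards [self_mem_nhdsWithin] with x hx
  have hxc : 0 < x - c := sub_pos.mpr (Set.mem_Ioi.mp hx)
  calc K * (x - c) ^ (1 - s) = K * (x - c) * (x - c) ^ (-s) := by
        rw [sub_eq_add_neg 1 s, rpow_one_add' hxc.le (by linarith), mul_assoc]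
    _ ≤ K * x * (x - c) ^ (-s) := by gcongr; linarith

theorem stmt_12_general (a b α β k Dmin : ℝ)
    (ha : 0 < a) (hb : 0 < b) (hα : 0 < α) (hβ : 0 < β) (hk : 0 < k)
    (hDmin : 0 ≤ Dmin)
    (σs Ns Cs : ℝ → ℝ)
    (hσs : ∀ D₀, σs D₀ = a * ((1 + α / β) / (D₀ - Dmin)) ^ (1 / α))
    (hNs : ∀ D₀, Ns D₀ = b * ((1 + β / α) / (D₀ - Dmin)) ^ (1 / β))
    (hCs : ∀ D₀, Cs D₀ = k * σs D₀ * Ns D₀ * D₀) :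
    (∀ D₀, Dmin < D₀ →
        Cs D₀ = k * a * b * (1 + α / β) ^ (1 / α) * (1 + β / α) ^ (1 / β) *
          D₀ * (D₀ - Dmin) ^ (-(1 / α) - 1 / β)) ∧
    (1 < 1 / α + 1 / β →
        Tendsto Cs (nhdsWithin Dmin (Set.Ioi Dmin)) atTop) := by
  have hA : 0 < 1 + α / β := by positivity
  have hB : 0 < 1 + β / α := by positivity
  have closed_form : ∀ D₀, Dmin < D₀ →
      Cs D₀ = k * a * b * (1 + α / β) ^ (1 / α) * (1 + β / α) ^ (1 / β) *
        D₀ * (D₀ - Dmin) ^ (-(1 / α) - 1 / β) := by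
    intro D₀ hD
    have h := div_rpow_mul_div_rpow hA.le hB.le (sub_pos.mpr hD) (1 / α) (1 / β)
    rw [hCs, hσs, hNs]
    linear_combination (k * a * b * D₀) * h
  refine ⟨closed_form, fun hs => ?_⟩
  have hK : 0 < k * a * b * (1 + α / β) ^ (1 / α) * (1 + β / α) ^ (1 / β) := by positivity
  refine (tendsto_mul_mul_sub_rpow_nhdsGT hDmin hK hs).congr' ?_
  filter_upwards [self_mem_nhdsWithin] with D₀ hD
  rw [closed_form D₀ hD, neg_add']

theorem stmt_12 (a b α β k Dmin : ℝ)
    (ha : 0 < a) (hb : 0 < b) (hα : 0 < α) (hβ : 0 < β) (hk : 0 < k)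
    (hDmin : 0 ≤ Dmin) (hαβ : α < 1 ∨ β < 1)
    (σs Ns Cs : ℝ → ℝ)
    (hσs : ∀ D₀, σs D₀ = a * ((1 + α / β) / (D₀ - Dmin)) ^ (1 / α))
    (hNs : ∀ D₀, Ns D₀ = b * ((1 + β / α) / (D₀ - Dmin)) ^ (1 / β))
    (hCs : ∀ D₀, Cs D₀ = k * σs D₀ * Ns D₀ * D₀) :
    (∀ D₀, Dmin < D₀ →
        Cs D₀ = k * a * b * (1 + α / β) ^ (1 / α) * (1 + β / α) ^ (1 / β) *
          D₀ * (D₀ - Dmin) ^ (-(1 / α) - 1 / β)) ∧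
    (1 < 1 / α + 1 / β →
        Tendsto Cs (nhdsWithin Dmin (Set.Ioi Dmin)) atTop) :=
  stmt_12_general a b α β k Dmin ha hb hα hβ hk hDmin σs Ns Cs hσs hNs hCs
end
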